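/- arXiv:1607.04798 — 4 statements merged into one kernel-verified Lean document; each statement's English description precedes it below -/
import Mathlib

section
/- Let G be a finite simple graph on the vertex set {1,…,n} that is chordal, with maximal cliques C₁,…,C_q, and let f be a real-valued function on real symmetric n×n matrices such that f(X) = f(Y) whenever X_{ij} = Y_{ij} for every i and for every edge (i,j) of G. Then the infimum of f(X) over all positive semidefinite real symmetric n×n matrices X equals the infimum of f(X) over all real symmetric n×n matrices X such that the principal submatrix X_{C_k C_k} is positive semidefinite for every k ∈ {1,…,q}. -/
/-- A finite simple graph is chordal if every cycle of length at least four has a chord,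
i.e., an edge of the graph joining two vertices of the cycle that is not an edge of the cycle. -/
def SimpleGraph.IsChordal {V : Type*} (G : SimpleGraph V) : Prop :=
  ∀ ⦃v : V⦄ (w : G.Walk v v), w.IsCycle → 4 ≤ w.length →
    ∃ x y, x ∈ w.support ∧ y ∈ w.support ∧ G.Adj x y ∧ s(x, y) ∉ w.edges

/-- A maximal clique: a clique not properly contained in another clique. -/
def SimpleGraph.IsMaxClique {V : Type*} (G : SimpleGraph V) (C : Finset V) : Prop :=
  G.IsClique (C : Set V) ∧ ∀ D : Finset V, G.IsClique (D : Set V) → C ⊆ D → C = D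

/-!
A symmetric `X` whose principal submatrices on the cliques of the chordal graph `G` are
positive semidefinite has a positive semidefinite completion: a matrix `Y ⪰ 0` with the same
diagonal and the same entries on the edges of `G`. Since `f X = f Y`, the two images of `f`
coincide (the other inclusion is trivial), and so do their infima.

The completion is built one vertex at a time. By Dirac's theorem (minimal vertex separators
of a chordal graph are cliques) there is a simplicial vertex `v`; complete the rest to `Y`.
The closed neighbourhood `K ∪ {v}` of `v` is a clique, so there is a Schur vector `s`
supported on `K` with `(X s)_K = X_{K v}` and `sᵀ X s ≤ X_{v v}`. Taking `Y s` as the new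
column gives `Lᵀ Y L + (X_{v v} - sᵀ Y s) e_v e_vᵀ` with `L = 1 + (s - e_v) e_vᵀ`, which is
positive semidefinite and has the prescribed entries.
-/

open Matrix

namespace SimpleGraph
variable {V : Type*} {G : SimpleGraph V}

def ReachableWithin (G : SimpleGraph V) (A : Set V) (u v : V) : Prop :=
  ∃ p : G.Walk u v, ∀ x ∈ p.support, x ∈ A

def Walk.IsInduced {u v : V} (p : G.Walk u v) : Prop :=
  ∀ x ∈ p.support, ∀ y ∈ p.support, G.Adj x y → s(x, y) ∈ p.edges

def IsChordalOn (G : SimpleGraph V) (A : Set V) : Prop :=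
  ∀ ⦃v : V⦄ (w : G.Walk v v), w.IsCycle → 4 ≤ w.length → (∀ x ∈ w.support, x ∈ A) →
    ∃ x y, x ∈ w.support ∧ y ∈ w.support ∧ G.Adj x y ∧ s(x, y) ∉ w.edges

def IsSimplicialIn (G : SimpleGraph V) (A : Set V) (v : V) : Prop :=
  v ∈ A ∧ G.IsClique (G.neighborSet v ∩ A)

theorem IsChordal.isChordalOn (hG : G.IsChordal) (A : Set V) : G.IsChordalOn A :=
  fun _ w hc hl _ => hG w hc hl

theorem IsChordalOn.mono {A B : Set V} (hA : G.IsChordalOn A) (h : B ⊆ A) : G.IsChordalOn B :=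
  fun _ w hc hl hw => hA w hc hl fun x hx => h (hw x hx)

theorem IsSimplicialIn.of_subset {A B : Set V} {v : V} (h : G.IsSimplicialIn B v)
    (hBA : B ⊆ A) (hN : G.neighborSet v ∩ A ⊆ B) : G.IsSimplicialIn A v :=
  ⟨hBA h.1, IsClique.subset (Set.subset_inter Set.inter_subset_left hN) h.2⟩

namespace Walk

theorem two_le_length_of_not_adj {u v : V} (p : G.Walk u v) (hne : u ≠ v)
    (hadj : ¬ G.Adj u v) : 2 ≤ p.length := by
  rcases p with _ | ⟨h, _ | ⟨_, _⟩⟩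
  · exact absurd rfl hne
  · exact absurd h hadj
  · simp

theorem IsPath.ne_start_of_mem_support_tail {u v x : V} {p : G.Walk u v} (hp : p.IsPath)
    (hx : x ∈ p.support.tail) : x ≠ u := by
  have := hp.support_nodup
  rw [← p.cons_tail_support, List.nodup_cons] at this
  rintro rfl
  exact this.1 hx

theorem exists_shortcut_of_adj_start {u v y : V} (p : G.Walk u v) (hy : y ∈ p.support)
    (h : G.Adj u y) (he : s(u, y) ∉ p.edges) :
    ∃ q : G.Walk u v, q.length < p.length ∧ q.support ⊆ p.support := by
  classical
  cases p with
  | nil => simp_all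
  | @cons _ c _ hc p =>
    have hy' : y ∈ p.support := by
      rcases List.mem_cons.mp hy with rfl | hy'
      · exact absurd h G.irrefl
      · exact hy'
    have hyc : y ≠ c := by
      rintro rfl
      simp at he
    refine ⟨cons h (p.dropUntil y hy'), ?_, ?_⟩
    · have hsplit := congrArg length (p.take_spec hy')
      have hpos : (p.takeUntil y hy').length ≠ 0 := mt eq_of_length_eq_zero hyc.symm
      rw [length_append] at hsplit
      simp only [length_cons]
      omega
    · intro z hz
      rcases List.mem_cons.mp hz with rfl | hz
      · simp
      · exact List.mem_cons_of_mem _ (p.support_dropUntil_subset_support hy' hz)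

theorem exists_shortcut {u v x y : V} (p : G.Walk u v) (hx : x ∈ p.support)
    (hy : y ∈ p.support) (h : G.Adj x y) (he : s(x, y) ∉ p.edges) :
    ∃ q : G.Walk u v, q.length < p.length ∧ q.support ⊆ p.support := by
  induction p with
  | nil => simp_all
  | @cons u c v hc p ih =>
    by_cases hxy : x ∈ p.support ∧ y ∈ p.support
    · obtain ⟨q, hlt, hq⟩ := ih hxy.1 hxy.2 fun he' => he (by simp [he'])
      refine ⟨cons hc q, by simpa using hlt, fun z hz => ?_⟩
      rcases List.mem_cons.mp hz with rfl | hz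
      · simp
      · exact List.mem_cons_of_mem _ (hq hz)
    · rcases not_and_or.mp hxy with hx' | hy'
      · obtain rfl : x = u := by simpa [hx'] using hx
        exact exists_shortcut_of_adj_start _ hy h he
      · obtain rfl : y = u := by simpa [hy'] using hy
        exact exists_shortcut_of_adj_start _ hx h.symm (by rwa [Sym2.eq_swap])

theorem IsPath.isCycle_append_reverse {u v : V} {p q : G.Walk u v} (hp : p.IsPath)
    (hq : q.IsPath) (hpq : ∀ x ∈ p.support, x ∈ q.support → x = u ∨ x = v)
    (hlen : 2 ≤ p.length) : (p.append q.reverse).IsCycle := by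
  refine hp.isCycle_append hq.reverse (fun z hzp hzq => ?_) (.inl hlen)
  rcases hpq z (List.mem_of_mem_tail hzp) (by simpa using List.mem_of_mem_tail hzq) with rfl | rfl
  · exact hp.ne_start_of_mem_support_tail hzp rfl
  · exact hq.reverse.ne_start_of_mem_support_tail hzq rfl

theorem IsInduced.append_reverse {u v : V} {p q : G.Walk u v} (hp : p.IsInduced)
    (hq : q.IsInduced) (hpq : ∀ x ∈ p.support, x ∉ q.support →
      ∀ y ∈ q.support, y ∉ p.support → ¬ G.Adj x y) :
    (p.append q.reverse).IsInduced := by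
  intro x hx y hy hxy
  rw [mem_support_append_iff, support_reverse, List.mem_reverse] at hx hy
  rw [edges_append, edges_reverse, List.mem_append, List.mem_reverse]
  by_cases hxp : x ∈ p.support ∧ y ∈ p.support
  · exact .inl (hp x hxp.1 y hxp.2 hxy)
  by_cases hxq : x ∈ q.support ∧ y ∈ q.support
  · exact .inr (hq x hxq.1 y hxq.2 hxy)
  exfalso
  rcases hx with hx | hx <;> rcases hy with hy | hy
  · exact hxp ⟨hx, hy⟩
  · exact hpq x hx (fun h => hxq ⟨h, hy⟩) y hy (fun h => hxp ⟨hx, h⟩) hxy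
  · exact hpq y hy (fun h => hxq ⟨hx, h⟩) x hx (fun h => hxp ⟨h, hy⟩) hxy.symm
  · exact hxq ⟨hx, hy⟩

theorem IsPath.isCycle_isInduced_append_reverse {u v : V} {p q : G.Walk u v}
    {P Q : V → Prop} (hp : p.IsPath) (hq : q.IsPath) (hpi : p.IsInduced) (hqi : q.IsInduced)
    (hpP : ∀ x ∈ p.support, x = u ∨ x = v ∨ P x) (hqQ : ∀ x ∈ q.support, x = u ∨ x = v ∨ Q x)
    (hPQ : ∀ x, P x → ¬ Q x) (hadj : ∀ x y, P x → Q y → ¬ G.Adj x y) (hlen : 2 ≤ p.length) :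
    (p.append q.reverse).IsCycle ∧ (p.append q.reverse).IsInduced := by
  have hside : ∀ {R : V → Prop} {p q : G.Walk u v}, (∀ x ∈ p.support, x = u ∨ x = v ∨ R x) →
      ∀ x ∈ p.support, x ∉ q.support → R x := by
    intro R p q hp x hx hxq
    rcases hp x hx with rfl | rfl | h
    · exact absurd q.start_mem_support hxq
    · exact absurd q.end_mem_support hxq
    · exact h
  refine ⟨hp.isCycle_append_reverse hq (fun x hxp hxq => ?_) hlen,
    hpi.append_reverse hqi fun x hxp hxq y hyq hyp =>
      hadj x y (hside hpP x hxp hxq) (hside hqQ y hyq hyp)⟩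
  rcases hpP x hxp with h | h | hP
  · exact .inl h
  · exact .inr h
  rcases hqQ x hxq with h | h | hQ
  · exact .inl h
  · exact .inr h
  · exact absurd hQ (hPQ x hP)

end Walk

namespace ReachableWithin
variable {A B : Set V} {u v w : V}

theorem refl (hu : u ∈ A) : G.ReachableWithin A u u := ⟨.nil, by simpa⟩

theorem _root_.SimpleGraph.Adj.reachableWithin (h : G.Adj u v) (hu : u ∈ A) (hv : v ∈ A) :
    G.ReachableWithin A u v :=
  ⟨h.toWalk, by simp [hu, hv]⟩

theorem symm (h : G.ReachableWithin A u v) : G.ReachableWithin A v u := by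
  obtain ⟨p, hp⟩ := h
  exact ⟨p.reverse, by simpa using hp⟩

theorem trans (h₁ : G.ReachableWithin A u v) (h₂ : G.ReachableWithin A v w) :
    G.ReachableWithin A u w := by
  obtain ⟨p, hp⟩ := h₁
  obtain ⟨q, hq⟩ := h₂
  exact ⟨p.append q, by simp only [Walk.mem_support_append_iff]; grind⟩

theorem mono (h : G.ReachableWithin A u v) (hAB : A ⊆ B) : G.ReachableWithin B u v := by
  obtain ⟨p, hp⟩ := h
  exact ⟨p, fun x hx => hAB (hp x hx)⟩

theorem mem_left (h : G.ReachableWithin A u v) : u ∈ A := by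
  obtain ⟨p, hp⟩ := h
  exact hp u p.start_mem_support

theorem mem_right (h : G.ReachableWithin A u v) : v ∈ A :=
  h.symm.mem_left

theorem within_component (h : G.ReachableWithin A u v) :
    G.ReachableWithin {x | G.ReachableWithin A u x} u v := by
  classical
  obtain ⟨p, hp⟩ := h
  exact ⟨p, fun x hx =>
    ⟨p.takeUntil x hx, fun y hy => hp y (p.support_takeUntil_subset_support hx hy)⟩⟩

theorem eq_or_adj_of_pair (h : G.ReachableWithin {u, v} u v) : u = v ∨ G.Adj u v := by
  obtain ⟨p, hp⟩ := h
  cases p with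
  | nil => exact .inl rfl
  | @cons _ c _ hc p =>
    rcases hp c (by simp) with rfl | rfl
    · exact absurd hc G.irrefl
    · exact .inr hc

theorem exists_adj_of_insert {s : V} (h : G.ReachableWithin (insert s A) u v)
    (hn : ¬ G.ReachableWithin A u v) (hu : u ∈ A) :
    ∃ x, G.ReachableWithin A u x ∧ G.Adj x s := by
  obtain ⟨p, hp⟩ := h
  induction p with
  | nil => exact absurd (refl hu) hn
  | @cons u c v hc p ih =>
    by_cases hcs : c = s
    · exact ⟨u, refl hu, hcs ▸ hc⟩
    have hcA : c ∈ A := by simpa [hcs] using hp c (by simp)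
    have huc := hc.reachableWithin hu hcA
    obtain ⟨x, hx, hxs⟩ := ih (fun h => hn (huc.trans h)) hcA fun x hx => hp x (by simp [hx])
    exact ⟨x, huc.trans hx, hxs⟩

theorem exists_isPath_isInduced (h : G.ReachableWithin A u v) :
    ∃ p : G.Walk u v, p.IsPath ∧ p.IsInduced ∧ ∀ x ∈ p.support, x ∈ A := by
  classical
  have hex : ∃ n, ∃ p : G.Walk u v, (∀ x ∈ p.support, x ∈ A) ∧ p.length = n := by
    obtain ⟨p, hp⟩ := h
    exact ⟨_, p, hp, rfl⟩
  obtain ⟨p, hpA, hpn⟩ := Nat.find_spec hex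
  have hmin : ∀ q : G.Walk u v, q.support ⊆ p.support → p.length ≤ q.length := fun q hq =>
    hpn ▸ Nat.find_min' hex ⟨q, fun x hx => hpA x (hq hx), rfl⟩
  have hpath : p.IsPath := by
    rw [← p.bypass_eq_self_of_length_le_length_bypass (hmin _ p.support_bypass_subset_support)]
    exact p.bypass_isPath
  refine ⟨p, hpath, fun x hx y hy hxy => ?_, hpA⟩
  by_contra he
  obtain ⟨q, hlt, hq⟩ := p.exists_shortcut hx hy hxy he
  exact absurd (hmin q hq) (not_le.mpr hlt)

end ReachableWithin

theorem exists_isInduced_path_via_component {T : Set V} {c σ τ : V}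
    (hσ : ∃ x, G.ReachableWithin T c x ∧ G.Adj x σ)
    (hτ : ∃ x, G.ReachableWithin T c x ∧ G.Adj x τ) :
    ∃ p : G.Walk σ τ, p.IsPath ∧ p.IsInduced ∧
      ∀ x ∈ p.support, x = σ ∨ x = τ ∨ G.ReachableWithin T c x := by
  obtain ⟨xσ, hcσ, hσ⟩ := hσ
  obtain ⟨xτ, hcτ, hτ⟩ := hτ
  set R := insert σ (insert τ {x | G.ReachableWithin T c x})
  have hsub : {x | G.ReachableWithin T c x} ⊆ R := fun x hx => by simp [R, hx]
  have hR : G.ReachableWithin R σ τ :=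
    (hσ.symm.reachableWithin (by simp [R]) (hsub hcσ)).trans
      (((hcσ.within_component.symm.trans hcτ.within_component).mono hsub).trans
        (hτ.reachableWithin (hsub hcτ) (by simp [R])))
  obtain ⟨p, hp, hpi, hpR⟩ := hR.exists_isPath_isInduced
  exact ⟨p, hp, hpi, fun x hx => by simpa [R] using hpR x hx⟩

/-- Two nonadjacent vertices `σ, τ` of the separator would close an induced cycle of length at
least four: an induced path through the component of `a` followed by one back through the
component of `b`. -/
theorem IsChordalOn.isClique_sdiff {A T : Set V} {a b : V} (hG : G.IsChordalOn A)
    (hTA : T ⊆ A) (ha : a ∈ T) (hb : b ∈ T) (hsep : ¬ G.ReachableWithin T a b)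
    (hmin : ∀ s ∈ A \ T, G.ReachableWithin (insert s T) a b) : G.IsClique (A \ T) := by
  intro σ hσ τ hτ hστ
  by_contra hadj
  obtain ⟨pa, hpa, hpai, hpaT⟩ := exists_isInduced_path_via_component
    ((hmin σ hσ).exists_adj_of_insert hsep ha) ((hmin τ hτ).exists_adj_of_insert hsep ha)
  obtain ⟨pb, hpb, hpbi, hpbT⟩ := exists_isInduced_path_via_component
    ((hmin σ hσ).symm.exists_adj_of_insert (mt .symm hsep) hb)
    ((hmin τ hτ).symm.exists_adj_of_insert (mt .symm hsep) hb)
  obtain ⟨hcyc, hind⟩ := hpa.isCycle_isInduced_append_reverse hpb hpai hpbi hpaT hpbT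
    (fun x hax hbx => hsep (hax.trans hbx.symm))
    (fun x y hax hby hxy => hsep ((hax.trans (hxy.reachableWithin hax.mem_right
      hby.mem_right)).trans hby.symm))
    (pa.two_le_length_of_not_adj hστ hadj)
  have hlen : 4 ≤ (pa.append pb.reverse).length := by
    have := pa.two_le_length_of_not_adj hστ hadj
    have := pb.two_le_length_of_not_adj hστ hadj
    simp only [Walk.length_append, Walk.length_reverse]
    omega
  have hmem : ∀ {c : V} {p : G.Walk σ τ},
      (∀ x ∈ p.support, x = σ ∨ x = τ ∨ G.ReachableWithin T c x) → ∀ x ∈ p.support, x ∈ A := by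
    intro c p hp x hx
    rcases hp x hx with rfl | rfl | h
    exacts [hσ.1, hτ.1, hTA h.mem_right]
  obtain ⟨x, y, hx, hy, hxy, he⟩ := hG _ hcyc hlen fun x hx => by
    rw [Walk.mem_support_append_iff, Walk.support_reverse, List.mem_reverse] at hx
    exact hx.elim (hmem hpaT x) (hmem hpbT x)
  exact he (hind x hx y hy hxy)

/-- `A \ T` is an inclusion-minimal set separating `a` from `b` inside `A`. -/
theorem exists_minimal_separator {A : Finset V} {a b : V} (ha : a ∈ A) (hb : b ∈ A)
    (hab : a ≠ b) (hadj : ¬ G.Adj a b) :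
    ∃ T ⊆ A, a ∈ T ∧ b ∈ T ∧ ¬ G.ReachableWithin T a b ∧
      ∀ s ∈ (A : Set V) \ T, G.ReachableWithin (insert s (T : Set V)) a b := by
  classical
  let P : Finset V → Prop := fun T => T ⊆ A ∧ a ∈ T ∧ b ∈ T ∧ ¬ G.ReachableWithin T a b
  have hP : P {a, b} := by
    refine ⟨by simp [Finset.insert_subset_iff, ha, hb], by simp, by simp, fun h => ?_⟩
    rcases ReachableWithin.eq_or_adj_of_pair (by simpa using h) with h | h
    exacts [hab h, hadj h]
  have hfin : {T | P T}.Finite :=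
    A.powerset.finite_toSet.subset fun T hT => Finset.mem_powerset.mpr hT.1
  obtain ⟨T, -, hT⟩ := hfin.exists_le_maximal hP
  obtain ⟨hTA, haT, hbT, hsep⟩ := hT.prop
  refine ⟨T, hTA, haT, hbT, hsep, ?_⟩
  rintro s ⟨hsA, hsT⟩
  by_contra h
  refine hT.not_prop_of_gt (Finset.ssubset_insert hsT) ⟨?_, ?_, ?_, by simpa using h⟩
  · exact Finset.insert_subset hsA hTA
  · exact Finset.mem_insert_of_mem haT
  · exact Finset.mem_insert_of_mem hbT

theorem IsChordalOn.exists_isSimplicialIn_notMem {A : Finset V} {S : Set V} (hG : G.IsChordalOn A)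
    (hS : G.IsClique S) (hAS : ¬ (A : Set V) ⊆ S) : ∃ v ∉ S, G.IsSimplicialIn A v := by
  classical
  induction A using Finset.strongInduction generalizing S with | H A ih =>
  by_cases hA : G.IsClique (A : Set V)
  · obtain ⟨v, hvA, hvS⟩ := Set.not_subset.mp hAS
    exact ⟨v, hvS, hvA, IsClique.subset Set.inter_subset_right hA⟩
  obtain ⟨a, ha, b, hb, hab, hnadj⟩ : ∃ a ∈ A, ∃ b ∈ A, a ≠ b ∧ ¬ G.Adj a b := by
    simpa [IsClique, Set.Pairwise] using hA
  obtain ⟨T, hTA, haT, hbT, hsep, hmin⟩ := exists_minimal_separator ha hb hab hnadj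
  have hT := hG.isClique_sdiff (Finset.coe_subset.mpr hTA) haT hbT hsep hmin
  -- the component of `c` together with the separator `A \ T` is a smaller chordal set
  have side : ∀ c ∈ T, ∀ d ∈ T, ¬ G.ReachableWithin T c d →
      ∃ v, G.ReachableWithin T c v ∧ G.IsSimplicialIn A v := by
    intro c hc d hd hcd
    set B := A.filter fun x => x ∉ T ∨ G.ReachableWithin T c x
    have hBA : (B : Set V) ⊆ A := Finset.coe_subset.mpr (Finset.filter_subset _ _)
    have hB : B ⊂ A := (Finset.ssubset_iff_of_subset (Finset.filter_subset _ _)).mpr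
      ⟨d, hTA hd, by simp [hd, hcd]⟩
    have hcB : c ∈ B := Finset.mem_filter.mpr ⟨hTA hc, .inr (.refl hc)⟩
    obtain ⟨v, hvS, hv⟩ := ih B hB (hG.mono hBA) hT fun h => (h hcB).2 hc
    have hvc : G.ReachableWithin T c v := by
      obtain ⟨hvA, hv'⟩ := Finset.mem_filter.mp hv.1
      exact hv'.resolve_left fun hvT => hvS ⟨hvA, hvT⟩
    refine ⟨v, hvc, hv.of_subset hBA fun x hx => Finset.mem_filter.mpr ⟨hx.2, ?_⟩⟩
    by_cases hxT : x ∈ T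
    · exact .inr (hvc.trans (hx.1.reachableWithin hvc.mem_right hxT))
    · exact .inl hxT
  obtain ⟨va, hava, hva⟩ := side a haT b hbT hsep
  obtain ⟨vb, hbvb, hvb⟩ := side b hbT a haT (mt .symm hsep)
  have hne : va ≠ vb := by
    rintro rfl
    exact hsep (hava.trans hbvb.symm)
  have hnadj' : ¬ G.Adj va vb := fun h =>
    hsep (hava.trans ((h.reachableWithin hava.mem_right hbvb.mem_right).trans hbvb.symm))
  by_cases hvaS : va ∈ S
  · exact ⟨vb, fun hvbS => hnadj' (hS hvaS hvbS hne), hvb⟩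
  · exact ⟨va, hvaS, hva⟩

end SimpleGraph

namespace Matrix

theorem extend_val_eq_zero {V : Type*} {K : Finset V} (x : K → ℝ) {i : V} (hi : i ∉ K) :
    Function.extend ((↑) : K → V) x 0 i = 0 :=
  Function.extend_apply' _ _ _ fun ⟨k, hk⟩ => hi (hk ▸ k.2)

theorem extend_val_restrict {V : Type*} {K : Finset V} {w : V → ℝ} (hw : ∀ i ∉ K, w i = 0) :
    Function.extend ((↑) : K → V) (fun k => w k) 0 = w := by
  ext i
  by_cases hi : i ∈ K
  · exact Subtype.val_injective.extend_apply _ _ ⟨i, hi⟩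
  · rw [extend_val_eq_zero _ hi, hw i hi]

variable {V : Type*} [Fintype V]

theorem extend_val_dotProduct (K : Finset V) (x : K → ℝ) (f : V → ℝ) :
    Function.extend (↑) x 0 ⬝ᵥ f = x ⬝ᵥ fun k => f k := by
  classical
  simp only [dotProduct]
  rw [← Finset.sum_subset (Finset.subset_univ K) fun i _ hi => by simp [extend_val_eq_zero x hi],
    ← Finset.sum_coe_sort K]
  simp

theorem mulVec_extend_val (X : Matrix V V ℝ) (K : Finset V) (y : K → ℝ) :
    X *ᵥ Function.extend (↑) y 0 = X.submatrix id (↑) *ᵥ y := by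
  ext i
  simp only [mulVec, dotProduct_comm (X i), extend_val_dotProduct]
  exact dotProduct_comm _ _

theorem extend_val_dotProduct_mulVec (X : Matrix V V ℝ) (K : Finset V) (x y : K → ℝ) :
    Function.extend (↑) x 0 ⬝ᵥ X *ᵥ Function.extend (↑) y 0 =
      x ⬝ᵥ X.submatrix (↑) (↑) *ᵥ y := by
  rw [extend_val_dotProduct, mulVec_extend_val]
  rfl

theorem IsSymm.dotProduct_mulVec_comm {X : Matrix V V ℝ} (hX : X.IsSymm) (x y : V → ℝ) :
    x ⬝ᵥ X *ᵥ y = y ⬝ᵥ X *ᵥ x := by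
  rw [dotProduct_mulVec, ← mulVec_transpose, hX.eq, dotProduct_comm]

theorem IsSymm.add_dotProduct_mulVec_add {X : Matrix V V ℝ} (hX : X.IsSymm) (x y : V → ℝ) :
    (x + y) ⬝ᵥ X *ᵥ (x + y) = x ⬝ᵥ X *ᵥ x + 2 * (y ⬝ᵥ X *ᵥ x) + y ⬝ᵥ X *ᵥ y := by
  simp only [mulVec_add, add_dotProduct, dotProduct_add, hX.dotProduct_mulVec_comm x y]
  ring

def PosSemidefOn (X : Matrix V V ℝ) (A : Finset V) : Prop :=
  ∀ w : V → ℝ, (∀ i ∉ A, w i = 0) → 0 ≤ w ⬝ᵥ X *ᵥ w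

theorem PosSemidefOn.mono {X : Matrix V V ℝ} {A B : Finset V} (hX : X.PosSemidefOn B)
    (h : A ⊆ B) : X.PosSemidefOn A :=
  fun w hw => hX w fun i hi => hw i (mt (@h i) hi)

theorem posSemidefOn_iff_posSemidef_submatrix {X : Matrix V V ℝ} (hX : X.IsSymm) (A : Finset V) :
    X.PosSemidefOn A ↔ (X.submatrix ((↑) : A → V) (↑)).PosSemidef := by
  rw [posSemidef_iff_dotProduct_mulVec]
  refine ⟨fun h => ⟨isHermitian_iff_isSymm.mpr (hX.submatrix _), fun x => ?_⟩,
    fun h w hw => ?_⟩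
  · simpa [extend_val_dotProduct_mulVec] using h _ fun i hi => extend_val_eq_zero x hi
  · simpa [← extend_val_dotProduct_mulVec, extend_val_restrict hw] using h.2 fun k => w k

theorem posSemidefOn_univ_iff [DecidableEq V] {X : Matrix V V ℝ} (hX : X.IsSymm) :
    X.PosSemidefOn Finset.univ ↔ X.PosSemidef := by
  rw [posSemidef_iff_dotProduct_mulVec]
  exact ⟨fun h => ⟨isHermitian_iff_isSymm.mpr hX, fun x => by simpa using h x (by simp)⟩,
    fun h w _ => by simpa using h.2 w⟩

theorem dotProduct_mulVec_eq_of_eqOn {X Y : Matrix V V ℝ} {K : Finset V}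
    (h : ∀ i ∈ K, ∀ j ∈ K, X i j = Y i j) {x y : V → ℝ} (hx : ∀ i ∉ K, x i = 0)
    (hy : ∀ i ∉ K, y i = 0) : x ⬝ᵥ X *ᵥ y = x ⬝ᵥ Y *ᵥ y := by
  rw [← extend_val_restrict hx, ← extend_val_restrict hy, extend_val_dotProduct_mulVec,
    extend_val_dotProduct_mulVec]
  congr 2
  ext a b
  exact h _ a.2 _ b.2

theorem IsSymm.exists_mulVec_eq {ι : Type*} [Fintype ι] {A : Matrix ι ι ℝ} (hA : A.IsSymm)
    {b : ι → ℝ} (hb : ∀ z, A *ᵥ z = 0 → b ⬝ᵥ z = 0) : ∃ s, A *ᵥ s = b := by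
  classical
  have hT : A.toEuclideanLin.IsSymmetric :=
    isSymmetric_toEuclideanLin_iff.mpr (isHermitian_iff_isSymm.mpr hA)
  have hb' : WithLp.toLp 2 b ∈ LinearMap.range A.toEuclideanLin := by
    rw [← Submodule.orthogonal_orthogonal (LinearMap.range _), hT.orthogonal_range]
    intro z hz
    simpa [EuclideanSpace.inner_eq_star_dotProduct, dotProduct_comm] using
      hb z.ofLp (congrArg WithLp.ofLp hz)
  obtain ⟨s, hs⟩ := hb'
  exact ⟨s.ofLp, congrArg WithLp.ofLp hs⟩

theorem IsSymm.exists_mulVec_eq_and_le {ι : Type*} [Fintype ι] {A : Matrix ι ι ℝ}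
    (hA : A.IsSymm) {b : ι → ℝ} {α : ℝ}
    (h : ∀ t w, 0 ≤ α * (t * t) + 2 * (b ⬝ᵥ w) * t + w ⬝ᵥ A *ᵥ w) :
    ∃ s, A *ᵥ s = b ∧ s ⬝ᵥ A *ᵥ s ≤ α := by
  obtain ⟨s, hs⟩ := hA.exists_mulVec_eq fun z hz => by
    have := discrim_le_zero (c := (0 : ℝ)) fun t => by simpa [hz] using h t z
    rw [discrim] at this
    nlinarith [sq_nonneg (b ⬝ᵥ z)]
  refine ⟨s, hs, ?_⟩
  have := h 1 (-s)
  rw [← hs, dotProduct_comm] at this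
  simp only [neg_dotProduct, mulVec_neg, dotProduct_neg] at this
  linarith

variable [DecidableEq V]

theorem PosSemidefOn.exists_schur_vector {X : Matrix V V ℝ} (hX : X.IsSymm) {K : Finset V}
    {v : V} (h : X.PosSemidefOn (insert v K)) :
    ∃ s : V → ℝ, (∀ i ∉ K, s i = 0) ∧ (∀ k ∈ K, (X *ᵥ s) k = X k v) ∧
      s ⬝ᵥ X *ᵥ s ≤ X v v := by
  have hb : ∀ t (w : K → ℝ), 0 ≤ X v v * (t * t) + 2 * ((fun k : K => X k v) ⬝ᵥ w) * t +
      w ⬝ᵥ X.submatrix (↑) (↑) *ᵥ w := by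
    intro t w
    have := h (Pi.single v t + Function.extend ((↑) : K → V) w 0) fun i hi => by
      rw [Finset.mem_insert, not_or] at hi
      simp [hi.1, extend_val_eq_zero w hi.2]
    rw [hX.add_dotProduct_mulVec_add, extend_val_dotProduct_mulVec] at this
    simp only [mulVec_single, single_dotProduct, extend_val_dotProduct, Pi.smul_apply,
      col_apply, op_smul_eq_mul] at this
    have hbw : (w ⬝ᵥ fun k : K => X k v * t) = ((fun k : K => X k v) ⬝ᵥ w) * t := by
      simp only [dotProduct, Finset.sum_mul]
      exact Finset.sum_congr rfl fun _ _ => by ring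
    rw [hbw] at this
    linarith
  obtain ⟨s, hs, hsα⟩ := (hX.submatrix _).exists_mulVec_eq_and_le hb
  refine ⟨Function.extend (↑) s 0, fun i hi => extend_val_eq_zero s hi, fun k hk => ?_, ?_⟩
  · rw [mulVec_extend_val]
    exact congrFun hs ⟨k, hk⟩
  · rwa [extend_val_dotProduct_mulVec]

theorem PosSemidefOn.exists_extension {Y : Matrix V V ℝ} (hY : Y.IsSymm) {A : Finset V}
    (hA : Y.PosSemidefOn A) {v : V} {s : V → ℝ} (hs : ∀ i ∉ A, s i = 0) {α : ℝ}
    (hα : s ⬝ᵥ Y *ᵥ s ≤ α) :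
    ∃ Z : Matrix V V ℝ, Z.IsSymm ∧ Z.PosSemidefOn (insert v A) ∧
      (∀ i ≠ v, ∀ j ≠ v, Z i j = Y i j) ∧ (∀ i ≠ v, Z i v = (Y *ᵥ s) i) ∧ Z v v = α := by
  set L : Matrix V V ℝ := 1 + vecMulVec (s - Pi.single v 1) (Pi.single v 1)
  set β := α - s ⬝ᵥ Y *ᵥ s
  have hL : ∀ x, L *ᵥ x = x + x v • (s - Pi.single v 1) := fun x => by
    simp [L, add_mulVec, vecMulVec_mulVec]
  have hZ : ∀ x y, x ⬝ᵥ (Lᵀ * Y * L + diagonal (Pi.single v β)) *ᵥ y =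
      (L *ᵥ x) ⬝ᵥ Y *ᵥ (L *ᵥ y) + β * (x v * y v) := fun x y => by
    rw [add_mulVec, dotProduct_add, ← mulVec_mulVec, ← mulVec_mulVec, dotProduct_mulVec,
      vecMul_transpose]
    congr 1
    simp [dotProduct, mulVec_diagonal, Pi.single_apply]
    ring
  have hLv : L *ᵥ Pi.single v 1 = s := by simp [hL]
  have hLj : ∀ j ≠ v, L *ᵥ Pi.single j 1 = Pi.single j 1 := fun j hj => by
    simp [hL, hj.symm]
  have hentry : ∀ i j, (Lᵀ * Y * L + diagonal (Pi.single v β)) i j =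
      (Pi.single i 1 : V → ℝ) ⬝ᵥ (Lᵀ * Y * L + diagonal (Pi.single v β)) *ᵥ Pi.single j 1 :=
    fun i j => by simp
  refine ⟨Lᵀ * Y * L + diagonal (Pi.single v β), ?_, fun w hw => ?_, fun i hi j hj => ?_,
    fun i hi => ?_, ?_⟩
  · refine IsSymm.add ?_ (isSymm_diagonal _)
    simp [IsSymm, transpose_mul, hY.eq, Matrix.mul_assoc]
  · rw [hZ]
    refine add_nonneg (hA _ fun i hi => ?_) (mul_nonneg (sub_nonneg.mpr hα) (mul_self_nonneg _))
    rw [hL]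
    by_cases hiv : i = v
    · subst hiv
      simp [hs i hi]
    · simp [hw i (by simp [hiv, hi]), hs i hi, hiv]
  · rw [hentry, hZ, hLj i hi, hLj j hj]
    simp [hi.symm, hj.symm]
  · rw [hentry, hZ, hLj i hi, hLv]
    simp [hi.symm]
  · rw [hentry, hZ, hLv]
    simp [β]

end Matrix

namespace SimpleGraph
variable {V : Type*} [Fintype V] {G : SimpleGraph V}

theorem exists_isMaxClique_superset {D : Finset V} (hD : G.IsClique (D : Set V)) :
    ∃ M, G.IsMaxClique M ∧ D ⊆ M := by
  obtain ⟨M, hDM, hM⟩ :=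
    Finite.exists_le_maximal (p := fun M : Finset V => G.IsClique (M : Set V)) hD
  exact ⟨M, ⟨hM.prop, fun E hE hME => hM.eq_of_le hE hME⟩, hDM⟩

variable [DecidableEq V]

theorem IsSimplicialIn.exists_posSemidefOn_extension {A : Finset V} {v : V}
    (hv : G.IsSimplicialIn A v) {X Y : Matrix V V ℝ} (hX : X.IsSymm)
    (hcl : ∀ D : Finset V, G.IsClique (D : Set V) → X.PosSemidefOn D) (hY : Y.IsSymm)
    (hYA : Y.PosSemidefOn (A.erase v))
    (hYX : ∀ i ∈ A.erase v, ∀ j ∈ A.erase v, (i = j ∨ G.Adj i j) → Y i j = X i j) :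
    ∃ Z : Matrix V V ℝ, Z.IsSymm ∧ Z.PosSemidefOn A ∧
      ∀ i ∈ A, ∀ j ∈ A, (i = j ∨ G.Adj i j) → Z i j = X i j := by
  classical
  set K := (A.erase v).filter (G.Adj v)
  have hKA : K ⊆ A.erase v := Finset.filter_subset _ _
  have hK : G.IsClique (insert v K : Finset V) := by
    have hKN : (K : Set V) ⊆ G.neighborSet v ∩ A := fun x hx => by
      obtain ⟨hxA, hvx⟩ := Finset.mem_filter.mp hx
      exact ⟨hvx, Finset.mem_of_mem_erase hxA⟩
    rw [Finset.coe_insert, isClique_insert]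
    exact ⟨hv.2.subset hKN, fun x hx _ => (Finset.mem_filter.mp hx).2⟩
  obtain ⟨s, hsK, hsX, hsα⟩ := (hcl _ hK).exists_schur_vector hX
  have hYK : ∀ i ∈ K, ∀ j ∈ K, Y i j = X i j := fun i hi j hj =>
    hYX i (hKA hi) j (hKA hj) (by
      by_cases hij : i = j
      · exact .inl hij
      · exact .inr (hK.subset (Finset.coe_subset.mpr (Finset.subset_insert v K)) hi hj hij))
  obtain ⟨Z, hZs, hZA, hZY, hZv, hZvv⟩ := hYA.exists_extension hY (v := v)
    (fun i hi => hsK i (mt (@hKA i) hi)) (α := X v v)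
    (by rwa [dotProduct_mulVec_eq_of_eqOn hYK hsK hsK])
  have hcol : ∀ i ∈ A, i ≠ v → G.Adj v i → Z i v = X i v := fun i hi hiv hvi => by
    have hiK : i ∈ K := Finset.mem_filter.mpr ⟨Finset.mem_erase.mpr ⟨hiv, hi⟩, hvi⟩
    have hsingle : ∀ j ∉ K, (Pi.single i 1 : V → ℝ) j = 0 := fun j hj =>
      Pi.single_eq_of_ne (by rintro rfl; exact hj hiK) _
    rw [hZv i hiv, ← hsX i hiK, ← single_one_dotProduct i (Y *ᵥ s),
      ← single_one_dotProduct i (X *ᵥ s), dotProduct_mulVec_eq_of_eqOn hYK hsingle hsK]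
  refine ⟨Z, hZs, by rwa [Finset.insert_erase hv.1] at hZA, fun i hi j hj hij => ?_⟩
  by_cases hiv : i = v <;> by_cases hjv : j = v
  · subst hiv hjv
    exact hZvv
  · subst hiv
    rw [hZs.apply, hcol j hj hjv (hij.resolve_left (Ne.symm hjv)), hX.apply]
  · subst hjv
    exact hcol i hi hiv (hij.resolve_left hiv).symm
  · rw [hZY i hiv j hjv]
    exact hYX i (Finset.mem_erase.mpr ⟨hiv, hi⟩) j (Finset.mem_erase.mpr ⟨hjv, hj⟩) hij

theorem IsChordalOn.exists_posSemidefOn_completion {A : Finset V} (hG : G.IsChordalOn A)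
    {X : Matrix V V ℝ} (hX : X.IsSymm)
    (hcl : ∀ D : Finset V, G.IsClique (D : Set V) → X.PosSemidefOn D) :
    ∃ Y : Matrix V V ℝ, Y.IsSymm ∧ Y.PosSemidefOn A ∧
      ∀ i ∈ A, ∀ j ∈ A, (i = j ∨ G.Adj i j) → Y i j = X i j := by
  induction A using Finset.strongInduction with | H A ih =>
  by_cases hA : G.IsClique (A : Set V)
  · exact ⟨X, hX, hcl A hA, fun _ _ _ _ _ => rfl⟩
  obtain ⟨v, -, hv⟩ := hG.exists_isSimplicialIn_notMem (S := ∅) isClique_empty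
    fun h => hA (by rw [Set.subset_empty_iff.mp h]; exact isClique_empty)
  obtain ⟨Y, hY, hYA, hYX⟩ := ih (A.erase v) (Finset.erase_ssubset hv.1)
    (hG.mono (Finset.coe_subset.mpr (Finset.erase_subset v A)))
  exact hv.exists_posSemidefOn_extension hX hcl hY hYA hYX

end SimpleGraph

open SimpleGraph in
theorem domain_space_decomposition_general (n q : ℕ) (G : SimpleGraph (Fin n)) (hG : G.IsChordal)
    (C : Fin q → Finset (Fin n))
    (hCall : ∀ D : Finset (Fin n), G.IsMaxClique D → ∃ k, C k = D)
    (f : Matrix (Fin n) (Fin n) ℝ → ℝ)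
    (hf : ∀ X Y : Matrix (Fin n) (Fin n) ℝ, X.IsSymm → Y.IsSymm →
      (∀ i, X i i = Y i i) → (∀ i j, G.Adj i j → X i j = Y i j) → f X = f Y) :
    sInf (f '' {X : Matrix (Fin n) (Fin n) ℝ | X.PosSemidef}) =
      sInf (f '' {X : Matrix (Fin n) (Fin n) ℝ | X.IsSymm ∧
        ∀ k, (X.submatrix ((↑) : (C k) → Fin n) ((↑) : (C k) → Fin n)).PosSemidef}) := by
  have hcl : ∀ X : Matrix (Fin n) (Fin n) ℝ, X.IsSymm →
      (∀ k, (X.submatrix ((↑) : (C k) → Fin n) ((↑) : (C k) → Fin n)).PosSemidef) →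
      ∀ D : Finset (Fin n), G.IsClique (D : Set (Fin n)) → X.PosSemidefOn D := by
    intro X hXs hXC D hD
    obtain ⟨M, hM, hDM⟩ := exists_isMaxClique_superset hD
    obtain ⟨k, rfl⟩ := hCall M hM
    exact ((posSemidefOn_iff_posSemidef_submatrix hXs _).mpr (hXC k)).mono hDM
  congr 1
  ext y
  constructor
  · rintro ⟨X, hX, rfl⟩
    exact ⟨X, ⟨isHermitian_iff_isSymm.mp hX.isHermitian, fun k => hX.submatrix _⟩, rfl⟩
  · rintro ⟨X, ⟨hXs, hXC⟩, rfl⟩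
    obtain ⟨Y, hYs, hY, hYX⟩ :=
      (hG.isChordalOn _).exists_posSemidefOn_completion (A := Finset.univ) hXs (hcl X hXs hXC)
    refine ⟨Y, (posSemidefOn_univ_iff hYs).mp hY, hf Y X hYs hXs (fun i => ?_) fun i j h => ?_⟩
    · exact hYX i (Finset.mem_univ _) i (Finset.mem_univ _) (.inl rfl)
    · exact hYX i (Finset.mem_univ _) j (Finset.mem_univ _) (.inr h)

/-- Domain-space decomposition: for a function `f` of symmetric matrices that only depends on
the diagonal entries and the entries indexed by edges of a chordal graph `G`, minimizing `f`
over positive semidefinite matrices gives the same optimal value as minimizing `f` over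
symmetric matrices all of whose principal submatrices indexed by the maximal cliques of `G`
are positive semidefinite. -/
theorem domain_space_decomposition (n q : ℕ) (G : SimpleGraph (Fin n)) (hG : G.IsChordal)
    (C : Fin q → Finset (Fin n))
    (hC : ∀ k, G.IsMaxClique (C k))
    (hCall : ∀ D : Finset (Fin n), G.IsMaxClique D → ∃ k, C k = D)
    (f : Matrix (Fin n) (Fin n) ℝ → ℝ)
    (hf : ∀ X Y : Matrix (Fin n) (Fin n) ℝ, X.IsSymm → Y.IsSymm →
      (∀ i, X i i = Y i i) → (∀ i j, G.Adj i j → X i j = Y i j) → f X = f Y) :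
    sInf (f '' {X : Matrix (Fin n) (Fin n) ℝ | X.PosSemidef}) =
      sInf (f '' {X : Matrix (Fin n) (Fin n) ℝ | X.IsSymm ∧
        ∀ k, (X.submatrix ((↑) : (C k) → Fin n) ((↑) : (C k) → Fin n)).PosSemidef}) :=
  domain_space_decomposition_general n q G hG C hCall f hf
end

section
/- Let X and Z be real symmetric positive definite n×n matrices. Then X^{1/2} (X^{1/2} Z X^{1/2})^{−1/2} X^{1/2} = Z^{−1/2} (Z^{1/2} X Z^{1/2})^{1/2} Z^{−1/2}. -/
open Matrix

/-!
Write `W = X^{1/2} (X^{1/2} Z X^{1/2})^{-1/2} X^{1/2}`. A direct computation shows that `W` solves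
the Riccati equation `W Z W = X`, so `(Z^{1/2} W Z^{1/2})² = Z^{1/2} X Z^{1/2}`. Since
`Z^{1/2} W Z^{1/2}` is positive semidefinite, uniqueness of positive semidefinite square roots
identifies it with `(Z^{1/2} X Z^{1/2})^{1/2}`, and conjugating by `Z^{-1/2}` gives the claim.
-/

namespace Matrix

variable {n : Type*} [Fintype n]

theorem mul_nonsing_inv_mul_riccati [DecidableEq n] {R : Type*} [CommRing R]
    {S Z M : Matrix n n R} (hM : IsUnit M.det) (hMS : M * M = S * Z * S) :
    S * M⁻¹ * S * Z * (S * M⁻¹ * S) = S * S := by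
  have hSZS : S * Z * S * M⁻¹ = M := by
    rw [← hMS, mul_nonsing_inv_cancel_right _ _ hM]
  calc S * M⁻¹ * S * Z * (S * M⁻¹ * S) = S * M⁻¹ * (S * Z * S * M⁻¹) * S := by
        simp only [Matrix.mul_assoc]
    _ = S * S := by rw [hSZS, Matrix.mul_assoc S, nonsing_inv_mul _ hM, Matrix.mul_one]

open scoped ComplexOrder

variable {𝕜 : Type*} [RCLike 𝕜]

theorem PosSemidef.mul_mul_of_isHermitian {A S : Matrix n n 𝕜} (hA : A.PosSemidef)
    (hS : S.IsHermitian) : (S * A * S).PosSemidef := by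
  simpa only [hS.eq] using hA.mul_mul_conjTranspose_same S

open scoped MatrixOrder in
theorem PosSemidef.eq_of_mul_self_eq_mul_self [DecidableEq n] {A B : Matrix n n 𝕜}
    (hA : A.PosSemidef) (hB : B.PosSemidef) (h : A * A = B * B) : A = B :=
  (CFC.sq_eq_sq_iff A B hA.nonneg hB.nonneg).1 (by simpa only [sq] using h)

end Matrix

theorem nt_scaling_two_forms_general (n : ℕ) (X Z sX sZ M1 M2 : Matrix (Fin n) (Fin n) ℝ)
    (hsX : sX.PosDef) (hsX2 : sX * sX = X)
    (hsZ : sZ.PosDef) (hsZ2 : sZ * sZ = Z)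
    (hM1 : M1.PosDef) (hM12 : M1 * M1 = sX * Z * sX)
    (hM2 : M2.PosDef) (hM22 : M2 * M2 = sZ * X * sZ) :
    sX * M1⁻¹ * sX = sZ⁻¹ * M2 * sZ⁻¹ := by
  set W := sX * M1⁻¹ * sX
  have hdM1 : IsUnit M1.det := (isUnit_iff_isUnit_det M1).1 hM1.isUnit
  have hdZ : IsUnit sZ.det := (isUnit_iff_isUnit_det sZ).1 hsZ.isUnit
  have hW : W.PosSemidef := hM1.inv.posSemidef.mul_mul_of_isHermitian hsX.isHermitian
  have hWZW : W * Z * W = X := hsX2 ▸ mul_nonsing_inv_mul_riccati hdM1 hM12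
  have hM2_eq : sZ * W * sZ = M2 := by
    refine (hW.mul_mul_of_isHermitian hsZ.isHermitian).eq_of_mul_self_eq_mul_self
      hM2.posSemidef ?_
    rw [hM22, ← hWZW, ← hsZ2]
    simp only [Matrix.mul_assoc]
  rw [← hM2_eq, Matrix.mul_assoc sZ W sZ, nonsing_inv_mul_cancel_left _ _ hdZ,
    mul_nonsing_inv_cancel_right _ _ hdZ]

/-- The two expressions for the Nesterov–Todd scaling matrix coincide:
`X^{1/2} (X^{1/2} Z X^{1/2})^{−1/2} X^{1/2} = Z^{−1/2} (Z^{1/2} X Z^{1/2})^{1/2} Z^{−1/2}`.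
Here `sX`, `sZ` are the (unique) symmetric positive definite square roots of `X`, `Z`, and
`M1`, `M2` are the symmetric positive definite square roots of `sX * Z * sX` and
`sZ * X * sZ` respectively. -/
theorem nt_scaling_two_forms (n : ℕ) (X Z sX sZ M1 M2 : Matrix (Fin n) (Fin n) ℝ)
    (hX : X.PosDef) (hZ : Z.PosDef)
    (hsX : sX.PosDef) (hsX2 : sX * sX = X)
    (hsZ : sZ.PosDef) (hsZ2 : sZ * sZ = Z)
    (hM1 : M1.PosDef) (hM12 : M1 * M1 = sX * Z * sX)
    (hM2 : M2.PosDef) (hM22 : M2 * M2 = sZ * X * sZ) :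
    sX * M1⁻¹ * sX = sZ⁻¹ * M2 * sZ⁻¹ :=
  nt_scaling_two_forms_general n X Z sX sZ M1 M2 hsX hsX2 hsZ hsZ2 hM1 hM12 hM2 hM22
end

section
/- Let P be an invertible real n×n matrix and define, for a real n×n matrix M, H_P(M) := (1/2)(P M P⁻¹ + (P M P⁻¹)ᵀ). Let X and Z be real symmetric positive semidefinite n×n matrices and δ a real number. Then H_P(X Z) = δ I if and only if X Z = δ I, where I is the n×n identity matrix. -/
/-!
Write `M := X Z - δ I`. The symmetrization equation says exactly that `S := P M P⁻¹` is
skew-symmetric, so `tr (S S) = -tr (Sᵀ S) ≤ 0`, with equality only for `S = 0`.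
On the other hand `tr (S S) = tr (M M)`, and writing `X = R R` with `R = √X`, the cyclicity of
the trace gives `tr (M M) = tr (C C)` for the symmetric matrix `C := R Z R - δ I`, so
`tr (S S) ≥ 0`. Hence `S = 0`, i.e. `X Z = δ I`.
-/

open Matrix
open scoped MatrixOrder

namespace Matrix

variable {n : Type*} [Fintype n] [DecidableEq n]

omit [Fintype n] in
theorem half_smul_add_transpose_eq_smul_one_iff {K : Type*} [Field K] [NeZero (2 : K)]
    (A : Matrix n n K) (c : K) :
    (1 / 2 : K) • (A + Aᵀ) = c • 1 ↔ (A - c • 1)ᵀ = -(A - c • 1) := by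
  rw [transpose_sub, transpose_smul, transpose_one, one_div, inv_smul_eq_iff₀ two_ne_zero,
    smul_smul, ← sub_eq_zero, ← sub_eq_zero (a := Aᵀ - _)]
  convert Iff.rfl using 2
  rw [two_mul, add_smul]
  abel

theorem trace_mul_self_sub_smul_one_comm {R : Type*} [CommRing R] (A B : Matrix n n R) (c : R) :
    trace ((A * B - c • 1) * (A * B - c • 1)) =
      trace ((B * A - c • 1) * (B * A - c • 1)) := by
  have hsq : trace (A * B * (A * B)) = trace (B * A * (B * A)) := by
    rw [mul_assoc, trace_mul_comm]
    simp only [mul_assoc]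
  simp only [sub_mul, mul_sub, smul_mul, Matrix.mul_smul, one_mul, mul_one, trace_sub, trace_smul,
    trace_mul_comm A B, hsq]

omit [DecidableEq n] in
theorem trace_mul_self_nonneg_of_isSymm {C : Matrix n n ℝ} (hC : C.IsSymm) :
    0 ≤ trace (C * C) := by
  have := (posSemidef_conjTranspose_mul_self C).trace_nonneg
  rwa [conjTranspose_eq_transpose_of_trivial, hC.eq] at this

omit [DecidableEq n] in
theorem eq_zero_of_transpose_eq_neg_of_trace_mul_self_nonneg {S : Matrix n n ℝ}
    (hS : Sᵀ = -S) (h : 0 ≤ trace (S * S)) : S = 0 := by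
  have hS' : Sᴴ = -S := by rwa [conjTranspose_eq_transpose_of_trivial]
  rw [← trace_conjTranspose_mul_self_eq_zero_iff]
  refine le_antisymm ?_ (posSemidef_conjTranspose_mul_self S).trace_nonneg
  rw [hS', neg_mul, trace_neg]
  exact neg_nonpos.2 h

theorem PosSemidef.trace_mul_sub_smul_one_mul_self_nonneg {X Z : Matrix n n ℝ}
    (hX : X.PosSemidef) (hZ : Z.IsSymm) (c : ℝ) :
    0 ≤ trace ((X * Z - c • 1) * (X * Z - c • 1)) := by
  have hR : (CFC.sqrt X).IsSymm :=
    isHermitian_iff_isSymm.1 (CFC.sqrt_nonneg X).posSemidef.1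
  rw [← CFC.sqrt_mul_sqrt_self X hX.nonneg, mul_assoc, trace_mul_self_sub_smul_one_comm]
  refine trace_mul_self_nonneg_of_isSymm ?_
  simp [IsSymm, transpose_mul, hR.eq, hZ.eq, mul_assoc]

theorem trace_conj_mul_self {R : Type*} [CommRing R] {P : Matrix n n R} (hP : IsUnit P.det)
    (M : Matrix n n R) :
    trace (P * M * P⁻¹ * (P * M * P⁻¹)) = trace (M * M) := by
  rw [mul_assoc (P * M), ← mul_assoc P⁻¹, ← mul_assoc P⁻¹, nonsing_inv_mul _ hP, one_mul,
    ← mul_assoc, mul_assoc P M M, trace_conj ((isUnit_iff_isUnit_det P).2 hP)]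

end Matrix

/-- For the similarity-symmetrization operator `H_P(M) := (1/2)(P M P⁻¹ + (P M P⁻¹)ᵀ)` with
`P` invertible and `X`, `Z` symmetric positive semidefinite, `H_P(X Z) = δ I` iff `X Z = δ I`. -/
theorem hp_symmetrization_iff (n : ℕ) (P : Matrix (Fin n) (Fin n) ℝ) (hP : IsUnit P.det)
    (X Z : Matrix (Fin n) (Fin n) ℝ) (hX : X.PosSemidef) (hZ : Z.PosSemidef) (δ : ℝ) :
    (1 / 2 : ℝ) • (P * (X * Z) * P⁻¹ + (P * (X * Z) * P⁻¹)ᵀ) =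
        δ • (1 : Matrix (Fin n) (Fin n) ℝ) ↔
      X * Z = δ • (1 : Matrix (Fin n) (Fin n) ℝ) := by
  have hconj : P * (X * Z) * P⁻¹ - δ • 1 = P * (X * Z - δ • 1) * P⁻¹ := by
    rw [mul_sub, sub_mul, Matrix.mul_smul, Matrix.smul_mul, mul_one, mul_nonsing_inv _ hP]
  rw [half_smul_add_transpose_eq_smul_one_iff, hconj, ← sub_eq_zero (a := X * Z)]
  refine ⟨fun hskew => ?_, fun h => by simp [h]⟩
  have hsq := (hX.trace_mul_sub_smul_one_mul_self_nonneg (isHermitian_iff_isSymm.1 hZ.1)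
    δ).trans_eq (trace_conj_mul_self hP _).symm
  have hzero := eq_zero_of_transpose_eq_neg_of_trace_mul_self_nonneg hskew hsq
  replace hzero := congr(P⁻¹ * $hzero * P)
  rwa [mul_zero, zero_mul, ← mul_assoc, ← mul_assoc, nonsing_inv_mul _ hP, one_mul, mul_assoc,
    nonsing_inv_mul _ hP, mul_one] at hzero
end

section
/- Let V be a finite set, let J and K be subsets of V with J ∪ K = V, and set S := J ∩ K. Let F : (J → ℝ) → ℝ and G : (K → ℝ) → ℝ be functions that are bounded below. Then the infimum over all x : V → ℝ of F(x restricted to J) + G(x restricted to K) equals the infimum over all y : S → ℝ of (the infimum of F(u) over all u : J → ℝ whose restriction to S equals y) + (the infimum of G(v) over all v : K → ℝ whose restriction to S equals y). -/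
/-- Correctness of the message-passing identity: for `J ∪ K = V` and `S = J ∩ K`, minimizing
`F(x|J) + G(x|K)` over `x : V → ℝ` equals minimizing, over assignments `y` of the shared
variables `S`, the sum of the two messages (the partial minimizations of `F` and `G` over
extensions of `y`). -/
theorem message_passing_identity (V : Type*) [Fintype V] (J K : Set V)
    (hJK : J ∪ K = Set.univ)
    (F : (J → ℝ) → ℝ) (G : (K → ℝ) → ℝ)
    (hF : BddBelow (Set.range F)) (hG : BddBelow (Set.range G)) :
    sInf {z : ℝ | ∃ x : V → ℝ,
        z = F (fun i => x i.1) + G (fun i => x i.1)} =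
      sInf {z : ℝ | ∃ y : ↥(J ∩ K) → ℝ,
        z = sInf {w : ℝ | ∃ u : J → ℝ,
              (∀ i : ↥(J ∩ K), u ⟨i.1, i.2.1⟩ = y i) ∧ w = F u}
          + sInf {w : ℝ | ∃ v : K → ℝ,
              (∀ i : ↥(J ∩ K), v ⟨i.1, i.2.2⟩ = y i) ∧ w = G v}} := by
  classical
  obtain ⟨bF, hbF⟩ := hF
  obtain ⟨bG, hbG⟩ := hG
  have hbF' : ∀ u, bF ≤ F u := fun u => hbF ⟨u, rfl⟩
  have hbG' : ∀ v, bG ≤ G v := fun v => hbG ⟨v, rfl⟩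
  set L := {z : ℝ | ∃ x : V → ℝ,
      z = F (fun i => x i.1) + G (fun i => x i.1)} with hLdef
  set A := fun (y : ↥(J ∩ K) → ℝ) => {w : ℝ | ∃ u : J → ℝ,
      (∀ i : ↥(J ∩ K), u ⟨i.1, i.2.1⟩ = y i) ∧ w = F u} with hAdef
  set B := fun (y : ↥(J ∩ K) → ℝ) => {w : ℝ | ∃ v : K → ℝ,
      (∀ i : ↥(J ∩ K), v ⟨i.1, i.2.2⟩ = y i) ∧ w = G v} with hBdef
  set R := {z : ℝ | ∃ y : ↥(J ∩ K) → ℝ, z = sInf (A y) + sInf (B y)} with hRdef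
  have hLne : L.Nonempty := ⟨_, fun _ => (0:ℝ), rfl⟩
  have hLbdd : BddBelow L := ⟨bF + bG, by
    rintro z ⟨x, rfl⟩; exact add_le_add (hbF' _) (hbG' _)⟩
  have hAne : ∀ y, (A y).Nonempty := by
    intro y
    refine ⟨_, fun j => if h : (j : V) ∈ J ∩ K then y ⟨j, h⟩ else 0, fun i => ?_, rfl⟩
    simp [i.2]
  have hBne : ∀ y, (B y).Nonempty := by
    intro y
    refine ⟨_, fun j => if h : (j : V) ∈ J ∩ K then y ⟨j, h⟩ else 0, fun i => ?_, rfl⟩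
    simp [i.2]
  have hAbdd : ∀ y, BddBelow (A y) := fun y => ⟨bF, by rintro w ⟨u, _, rfl⟩; exact hbF' u⟩
  have hBbdd : ∀ y, BddBelow (B y) := fun y => ⟨bG, by rintro w ⟨v, _, rfl⟩; exact hbG' v⟩
  have hRne : R.Nonempty := ⟨_, fun _ => (0:ℝ), rfl⟩
  have hRbdd : BddBelow R := ⟨bF + bG, by
    rintro z ⟨y, rfl⟩
    exact add_le_add (le_csInf (hAne y) (by rintro w ⟨u, _, rfl⟩; exact hbF' u))
      (le_csInf (hBne y) (by rintro w ⟨v, _, rfl⟩; exact hbG' v))⟩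
  apply le_antisymm
  · -- LHS ≤ RHS
    refine le_csInf hRne ?_
    rintro z ⟨y, rfl⟩
    -- show sInf L ≤ sInf (A y) + sInf (B y)
    have key : ∀ a ∈ A y, ∀ b ∈ B y, sInf L ≤ a + b := by
      rintro a ⟨u, hu, rfl⟩ b ⟨v, hv, rfl⟩
      have hx : ∀ i : V, i ∉ J → i ∈ K := by
        intro i hi
        have : i ∈ J ∪ K := hJK ▸ Set.mem_univ i
        exact this.resolve_left hi
      set x : V → ℝ := fun i => if h : i ∈ J then u ⟨i, h⟩ else v ⟨i, hx i h⟩ with hxdef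
      have h1 : (fun i : J => x i.1) = u := by
        funext i; simp [hxdef, i.2]
      have h2 : (fun i : K => x i.1) = v := by
        funext i
        by_cases h : (i : V) ∈ J
        · have e1 := hu ⟨i.1, ⟨h, i.2⟩⟩
          have e2 := hv ⟨i.1, ⟨h, i.2⟩⟩
          simp only [hxdef, dif_pos h]
          rw [e1, ← e2]
        · simp [hxdef, h]
      calc sInf L ≤ F (fun i : J => x i.1) + G (fun i : K => x i.1) :=
              csInf_le hLbdd ⟨x, rfl⟩
        _ = F u + G v := by rw [h1, h2]
    have h1 : sInf L - sInf (B y) ≤ sInf (A y) := by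
      refine le_csInf (hAne y) fun a ha => ?_
      have : sInf L - a ≤ sInf (B y) :=
        le_csInf (hBne y) fun b hb => by linarith [key a ha b hb]
      linarith
    linarith
  · -- RHS ≤ LHS
    refine le_csInf hLne ?_
    rintro z ⟨x, rfl⟩
    set y : ↥(J ∩ K) → ℝ := fun i => x i.1 with hydef
    have h1 : sInf (A y) ≤ F (fun i : J => x i.1) :=
      csInf_le (hAbdd y) ⟨fun i => x i.1, fun i => rfl, rfl⟩
    have h2 : sInf (B y) ≤ G (fun i : K => x i.1) :=
      csInf_le (hBbdd y) ⟨fun i => x i.1, fun i => rfl, rfl⟩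
    calc sInf R ≤ sInf (A y) + sInf (B y) := csInf_le hRbdd ⟨y, rfl⟩
      _ ≤ _ := add_le_add h1 h2
end
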